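/- Let d be a nonnegative integer, (f_n) a sequence of positive reals with f_n/n^d → 1, and α a real constant. Then for every compact K ⊂ ℂ, sup_{η∈K} | ∑_{n=0}^{N-1} (f_n/N^{d+1})(1+η/N)^{n+α} − ∫_0^1 t^d e^{ηt} dt | → 0 as N → ∞, where (1+η/N)^{n+α} is defined via the principal branch. -/

import Mathlib

/-!
Write `(1 + η/N)^(n+α) = exp ((n+α) log (1 + η/N))`. Since `log (1 + w) = w + O(|w|²)`, this is
`exp (η n/N) + O(1/N)` uniformly in `η ∈ K` and `n < N`. Replacing `f n` by `n^d` then costs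
`∑_{n<N} |f n - n^d| / N^(d+1)`, which tends to zero because `f n - n^d = o(n^d)`. What is left is a
Riemann sum of `t ↦ t^d e^(ηt)` on `[0, 1]`, and it converges to the integral uniformly in `η ∈ K`
because `(t, η) ↦ t^d e^(ηt)` is uniformly continuous on the compact set `[0, 1] × K`.
-/

open Complex Filter Finset intervalIntegral Asymptotics

noncomputable def riemannSum {E : Type*} [AddCommMonoid E] [Module ℝ E] (g : ℝ → E) (N : ℕ) : E :=
  ∑ n ∈ range N, (1 / N : ℝ) • g (n / N)

theorem norm_integral_sub_riemannSum_le {E : Type*} [NormedAddCommGroup E] [NormedSpace ℝ E]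
    [CompleteSpace E] {g : ℝ → E} (hg : ContinuousOn g (Set.Icc 0 1)) {N : ℕ} (hN : 0 < N)
    {ε : ℝ} (hε : ∀ s ∈ Set.Icc (0 : ℝ) 1, ∀ t ∈ Set.Icc (0 : ℝ) 1, |t - s| ≤ 1 / N →
      ‖g t - g s‖ ≤ ε) :
    ‖(∫ t in (0 : ℝ)..1, g t) - riemannSum g N‖ ≤ ε := by
  have hN' : (0 : ℝ) < N := by exact_mod_cast hN
  have hnode : ∀ k ≤ N, (k / N : ℝ) ∈ Set.Icc 0 1 := fun k hk =>
    ⟨by positivity, div_le_one_of_le₀ (by exact_mod_cast hk) hN'.le⟩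
  have hint : ∀ k < N, IntervalIntegrable g MeasureTheory.volume (k / N : ℝ) ((k + 1 : ℕ) / N) :=
    fun k hk =>
      (hg.mono (Set.uIcc_subset_Icc (hnode k hk.le) (hnode (k + 1) hk))).intervalIntegrable
  have hsplit := sum_integral_adjacent_intervals hint
  rw [Nat.cast_zero, zero_div, div_self hN'.ne'] at hsplit
  rw [riemannSum, ← hsplit, ← sum_sub_distrib]
  have hpiece : ∀ k ∈ range N,
      ‖(∫ t in (k / N : ℝ)..((k + 1 : ℕ) / N), g t) - (1 / N : ℝ) • g (k / N)‖ ≤ ε / N := by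
    intro k hk
    have hk := mem_range.1 hk
    have hlen : ((k + 1 : ℕ) / N : ℝ) - k / N = 1 / N := by push_cast; ring
    have ha := hnode k hk.le
    have hb := hnode (k + 1) hk
    calc _ = ‖∫ t in (k / N : ℝ)..((k + 1 : ℕ) / N), (g t - g (k / N))‖ := by
          rw [integral_sub (hint k hk) intervalIntegrable_const, integral_const, hlen]
      _ ≤ ε * |((k + 1 : ℕ) / N : ℝ) - k / N| := by
          refine norm_integral_le_of_norm_le_const fun t ht => ?_
          rw [Set.uIoc_of_le (by linarith [hlen, one_div_pos.2 hN'])] at ht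
          exact hε _ ha _ ⟨ha.1.trans ht.1.le, ht.2.trans hb.2⟩
            (by rw [abs_of_pos (sub_pos.2 ht.1)]; linarith [ht.2])
      _ = ε / N := by rw [hlen, abs_of_pos (by positivity)]; ring
  calc _ ≤ ∑ k ∈ range N, ε / N := norm_sum_le_of_le _ hpiece
    _ = ε := by rw [sum_const, card_range, nsmul_eq_mul]; field_simp

theorem tendstoUniformlyOn_riemannSum {X E : Type*} [PseudoMetricSpace X] [NormedAddCommGroup E]
    [NormedSpace ℝ E] [CompleteSpace E] {F : ℝ → X → E} {K : Set X} (hK : IsCompact K)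
    (hF : ContinuousOn (Function.uncurry F) (Set.Icc 0 1 ×ˢ K)) :
    TendstoUniformlyOn (fun N x => riemannSum (F · x) N)
      (fun x => ∫ t in (0 : ℝ)..1, F t x) atTop K := by
  rw [Metric.tendstoUniformlyOn_iff]
  intro ε hε
  obtain ⟨δ, hδ, hF_unif⟩ := Metric.uniformContinuousOn_iff.1
    ((isCompact_Icc.prod hK).uniformContinuousOn_of_continuous hF) (ε / 2) (half_pos hε)
  filter_upwards [eventually_gt_atTop 0, tendsto_one_div_atTop_nhds_zero_nat.eventually_lt_const hδ]
    with N hN hNδ x hx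
  rw [dist_eq_norm]
  refine (norm_integral_sub_riemannSum_le ?_ hN fun s hs t ht hts => ?_).trans_lt (half_lt_self hε)
  · exact hF.comp (Continuous.continuousOn (f := fun t : ℝ => (t, x)) (by fun_prop))
      fun t ht => ⟨ht, hx⟩
  · rw [← dist_eq_norm]
    refine (hF_unif (t, x) ⟨ht, hx⟩ (s, x) ⟨hs, hx⟩ ?_).le
    rw [Prod.dist_eq, dist_self, Real.dist_eq]
    exact max_lt (hts.trans_lt hNδ) hδ

theorem tendsto_sum_norm_div_pow_succ_of_isLittleO {E : Type*} [NormedAddCommGroup E] {a : ℕ → E}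
    {d : ℕ} (ha : a =o[atTop] fun n => (n : ℝ) ^ d) :
    Tendsto (fun N : ℕ => (∑ n ∈ range N, ‖a n‖) / (N : ℝ) ^ (d + 1)) atTop (nhds 0) := by
  have hsucc : (fun n => ‖a n‖) =o[atTop] fun n => ((n : ℝ) + 1) ^ d :=
    ha.norm_left.trans_isBigO <| IsBigO.of_bound 1 <| Eventually.of_forall fun n => by
      rw [one_mul, norm_pow, norm_pow, Real.norm_natCast, Real.norm_of_nonneg (by positivity)]
      exact pow_le_pow_left₀ (Nat.cast_nonneg n) (by linarith) d
  have hsum_atTop : Tendsto (fun N : ℕ => ∑ n ∈ range N, ((n : ℝ) + 1) ^ d) atTop atTop := by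
    refine tendsto_atTop_mono (fun N => ?_) tendsto_natCast_atTop_atTop
    simpa using card_nsmul_le_sum (range N) (fun n => ((n : ℝ) + 1) ^ d) 1 fun n _ =>
      one_le_pow₀ (le_add_of_nonneg_left n.cast_nonneg)
  have hsum_le : (fun N : ℕ => ∑ n ∈ range N, ((n : ℝ) + 1) ^ d) =O[atTop]
      fun N : ℕ => (N : ℝ) ^ (d + 1) := by
    refine IsBigO.of_bound 1 <| Eventually.of_forall fun N => ?_
    rw [Real.norm_of_nonneg (by positivity), Real.norm_of_nonneg (by positivity), one_mul,
      pow_succ']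
    simpa using sum_le_card_nsmul (range N) _ ((N : ℝ) ^ d) fun n hn =>
      pow_le_pow_left₀ (by positivity) (by exact_mod_cast mem_range.1 hn) d
  exact ((hsucc.sum_range (fun n => by positivity) hsum_atTop).trans_isBigO
    hsum_le).tendsto_div_nhds_zero

theorem isLittleO_sub_pow_of_tendsto_div_pow {f : ℕ → ℝ} {d : ℕ}
    (h : Tendsto (fun n => f n / (n : ℝ) ^ d) atTop (nhds 1)) :
    (fun n => f n - (n : ℝ) ^ d) =o[atTop] fun n => (n : ℝ) ^ d :=
  (isEquivalent_of_tendsto_one h).isLittleO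

theorem norm_exp_sub_exp_le {z w : ℂ} (h : ‖z - w‖ ≤ 1) :
    ‖exp z - exp w‖ ≤ 2 * Real.exp w.re * ‖z - w‖ := by
  have hfactor : exp z - exp w = exp w * (exp (z - w) - 1) := by
    rw [mul_sub, ← exp_add, add_sub_cancel, mul_one]
  calc ‖exp z - exp w‖ = Real.exp w.re * ‖exp (z - w) - 1‖ := by
        rw [hfactor, norm_mul, Complex.norm_exp]
    _ ≤ Real.exp w.re * (2 * ‖z - w‖) := by gcongr; exact norm_exp_sub_one_le h
    _ = 2 * Real.exp w.re * ‖z - w‖ := by ring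

theorem norm_one_add_cpow_sub_exp_le {w : ℂ} (hw : ‖w‖ ≤ 1 / 2) {n α : ℝ} (hn : 0 ≤ n)
    (h : n * ‖w‖ ^ 2 + 2 * |α| * ‖w‖ ≤ 1) :
    ‖(1 + w) ^ ((n : ℂ) + α) - exp (n * w)‖ ≤
      2 * Real.exp (n * w.re) * (n * ‖w‖ ^ 2 + 2 * |α| * ‖w‖) := by
  have hw1 : ‖w‖ < 1 := hw.trans_lt (by norm_num)
  have hne : 1 + w ≠ 0 := fun h0 => by
    rw [eq_neg_of_add_eq_zero_right h0, norm_neg, norm_one] at hw1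
    exact lt_irrefl _ hw1
  have hLw : ‖log (1 + w) - w‖ ≤ ‖w‖ ^ 2 := by
    refine (norm_log_one_add_sub_self_le hw1).trans ?_
    have : (1 - ‖w‖)⁻¹ ≤ 2 := by rw [inv_le_comm₀ (by linarith) two_pos]; linarith
    calc ‖w‖ ^ 2 * (1 - ‖w‖)⁻¹ / 2 ≤ ‖w‖ ^ 2 * 2 / 2 := by gcongr
      _ = ‖w‖ ^ 2 := by ring
  have hL : ‖log (1 + w)‖ ≤ 2 * ‖w‖ :=
    (norm_log_one_add_half_le_self hw).trans (by linarith [norm_nonneg w])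
  have hexponent : ‖log (1 + w) * ((n : ℂ) + α) - n * w‖ ≤ n * ‖w‖ ^ 2 + 2 * |α| * ‖w‖ := by
    calc ‖log (1 + w) * ((n : ℂ) + α) - n * w‖ = ‖n * (log (1 + w) - w) + α * log (1 + w)‖ := by
          ring_nf
      _ ≤ n * ‖log (1 + w) - w‖ + |α| * ‖log (1 + w)‖ := by
          refine (norm_add_le _ _).trans_eq ?_
          rw [norm_mul, norm_mul, Complex.norm_real, Complex.norm_real, Real.norm_of_nonneg hn,
            Real.norm_eq_abs]
      _ ≤ n * ‖w‖ ^ 2 + |α| * (2 * ‖w‖) := by gcongr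
      _ = n * ‖w‖ ^ 2 + 2 * |α| * ‖w‖ := by ring
  rw [cpow_def_of_ne_zero hne, ← re_ofReal_mul]
  exact (norm_exp_sub_exp_le (hexponent.trans h)).trans (by gcongr)

theorem norm_one_add_div_cpow_sub_exp_le {R α : ℝ} {η : ℂ} (hη : ‖η‖ ≤ R) {N n : ℕ} (hn : n ≤ N)
    (hN : 0 < N) (hRN : 2 * R ≤ N) (hαN : R ^ 2 + 2 * |α| * R ≤ N) :
    ‖(1 + η / N) ^ ((n : ℂ) + α) - exp (η * (n / N : ℝ))‖ ≤
      2 * Real.exp R * ((R ^ 2 + 2 * |α| * R) / N) := by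
  have hN' : (0 : ℝ) < N := by exact_mod_cast hN
  have hn' : (n : ℝ) ≤ N := by exact_mod_cast hn
  have hw : ‖η / N‖ ≤ R / N := by
    rw [norm_div, Complex.norm_natCast]; gcongr
  have hsmall : (n : ℝ) * ‖η / N‖ ^ 2 + 2 * |α| * ‖η / N‖ ≤ (R ^ 2 + 2 * |α| * R) / N := by
    calc (n : ℝ) * ‖η / N‖ ^ 2 + 2 * |α| * ‖η / N‖ ≤ N * (R / N) ^ 2 + 2 * |α| * (R / N) := by
          gcongr
      _ = (R ^ 2 + 2 * |α| * R) / N := by field_simp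
  have hre : (n : ℝ) * (η / N).re ≤ R := by
    calc (n : ℝ) * (η / N).re ≤ n * ‖η / N‖ := by gcongr; exact re_le_norm _
      _ ≤ N * (R / N) := by gcongr
      _ = R := by field_simp
  have hcpow := norm_one_add_cpow_sub_exp_le (hw.trans (by rw [div_le_iff₀ hN']; linarith))
    n.cast_nonneg (α := α) (hsmall.trans (by rwa [div_le_one hN']))
  have hexp : exp (η * (n / N : ℝ)) = exp (n * (η / N)) := by push_cast; ring_nf
  rw [hexp]
  exact hcpow.trans (by gcongr)

theorem norm_mul_cpow_sub_riemannSum_term_le (d : ℕ) (x : ℝ) {R α : ℝ} {η : ℂ} (hη : ‖η‖ ≤ R)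
    {N n : ℕ} (hn : n ≤ N) (hN : 0 < N) (hRN : 2 * R ≤ N) (hαN : R ^ 2 + 2 * |α| * R ≤ N) :
    ‖((x : ℂ) / (N : ℂ) ^ (d + 1)) * (1 + η / N) ^ ((n : ℂ) + α) -
        (1 / N : ℝ) • (((n / N : ℝ) : ℂ) ^ d * exp (η * (n / N : ℝ)))‖ ≤
      3 * Real.exp R * (|x - (n : ℝ) ^ d| / (N : ℝ) ^ (d + 1)) +
        2 * Real.exp R * ((R ^ 2 + 2 * |α| * R) / N) / N := by
  have hN' : (0 : ℝ) < N := by exact_mod_cast hN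
  have hnN : (n / N : ℝ) ≤ 1 := div_le_one_of_le₀ (by exact_mod_cast hn) hN'.le
  set p := (1 + η / N) ^ ((n : ℂ) + α)
  set e := exp (η * (n / N : ℝ))
  have hpe : ‖p - e‖ ≤ 2 * Real.exp R * ((R ^ 2 + 2 * |α| * R) / N) :=
    norm_one_add_div_cpow_sub_exp_le hη hn hN hRN hαN
  have he : ‖e‖ ≤ Real.exp R := by
    rw [Complex.norm_exp, re_mul_ofReal]
    gcongr
    calc η.re * (n / N) ≤ R * 1 := mul_le_mul ((re_le_norm η).trans hη) hnN (by positivity)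
          ((norm_nonneg η).trans hη)
      _ = R := mul_one R
  have hp : ‖p‖ ≤ 3 * Real.exp R := by
    have : (R ^ 2 + 2 * |α| * R) / N ≤ 1 := by rwa [div_le_one hN']
    have : ‖p - e‖ ≤ 2 * Real.exp R := hpe.trans (by nlinarith [Real.exp_pos R])
    calc ‖p‖ = ‖e + (p - e)‖ := by rw [add_sub_cancel]
      _ ≤ 3 * Real.exp R := by linarith [norm_add_le e (p - e)]
  have hsplit : ((x : ℂ) / (N : ℂ) ^ (d + 1)) * p - (1 / N : ℝ) • (((n / N : ℝ) : ℂ) ^ d * e) =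
      ((x - (n : ℝ) ^ d : ℝ) / (N : ℂ) ^ (d + 1)) * p + ((n / N : ℝ) ^ d / N : ℝ) * (p - e) := by
    rw [Complex.real_smul]; push_cast; field_simp; ring
  rw [hsplit]
  refine (norm_add_le _ _).trans (add_le_add ?_ ?_)
  · rw [norm_mul, norm_div, norm_pow, Complex.norm_real, Complex.norm_natCast, Real.norm_eq_abs,
      mul_comm]
    gcongr
  · calc ‖(((n / N : ℝ) ^ d / N : ℝ) : ℂ) * (p - e)‖ = (n / N : ℝ) ^ d / N * ‖p - e‖ := by
          rw [norm_mul, Complex.norm_real, Real.norm_of_nonneg (by positivity)]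
      _ ≤ 1 / N * (2 * Real.exp R * ((R ^ 2 + 2 * |α| * R) / N)) := by
          gcongr
          exact pow_le_one₀ (by positivity) hnN
      _ = _ := by ring

theorem norm_sum_mul_cpow_sub_riemannSum_le (d : ℕ) (f : ℕ → ℝ) {R α : ℝ} {η : ℂ}
    (hη : ‖η‖ ≤ R) {N : ℕ} (hN : 0 < N) (hRN : 2 * R ≤ N) (hαN : R ^ 2 + 2 * |α| * R ≤ N) :
    ‖∑ n ∈ range N, ((f n : ℂ) / (N : ℂ) ^ (d + 1)) * (1 + η / N) ^ ((n : ℂ) + α) -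
        riemannSum (fun t => (t : ℂ) ^ d * exp (η * t)) N‖ ≤
      3 * Real.exp R * ((∑ n ∈ range N, |f n - (n : ℝ) ^ d|) / (N : ℝ) ^ (d + 1)) +
        2 * Real.exp R * ((R ^ 2 + 2 * |α| * R) / N) := by
  have hN' : (0 : ℝ) < N := by exact_mod_cast hN
  rw [riemannSum, ← sum_sub_distrib]
  refine (norm_sum_le _ _).trans ((sum_le_sum fun n hn =>
    norm_mul_cpow_sub_riemannSum_term_le d (f n) hη (mem_range.1 hn).le hN hRN hαN).trans_eq ?_)
  rw [sum_add_distrib, sum_const, card_range, nsmul_eq_mul, ← mul_sum, ← sum_div]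
  field_simp

theorem tendstoUniformlyOn_zero_of_norm_le {ι X E : Type*} [SeminormedAddCommGroup E]
    {l : Filter ι} {F : ι → X → E} {K : Set X} {b : ι → ℝ} (hb : Tendsto b l (nhds 0))
    (hF : ∀ᶠ i in l, ∀ x ∈ K, ‖F i x‖ ≤ b i) : TendstoUniformlyOn F 0 l K := by
  rw [Metric.tendstoUniformlyOn_iff]
  intro ε hε
  filter_upwards [hF, hb.eventually_lt_const hε] with i hi hbi x hx
  rw [Pi.zero_apply, dist_zero_left]
  exact (hi x hx).trans_lt hbi

theorem sum_tendsto_uniformly (d : ℕ) (f : ℕ → ℝ)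
    (hlim : Tendsto (fun n => f n / (n : ℝ) ^ d) atTop (nhds 1))
    (α : ℝ) (K : Set ℂ) (hK : IsCompact K) :
    TendstoUniformlyOn
      (fun N η => ∑ n ∈ Finset.range N,
        ((f n : ℂ) / (N : ℂ) ^ (d + 1)) * (1 + η / N) ^ ((n : ℂ) + α))
      (fun η => ∫ t in (0 : ℝ)..1, (t : ℂ) ^ d * Complex.exp (η * t))
      atTop K := by
  obtain ⟨R, hKR⟩ := hK.isBounded.exists_norm_le
  have hriemann := tendstoUniformlyOn_riemannSum hK
    (F := fun t η => (t : ℂ) ^ d * exp (η * t)) (Continuous.continuousOn (by fun_prop))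
  have hsum :=
    tendsto_sum_norm_div_pow_succ_of_isLittleO (isLittleO_sub_pow_of_tendsto_div_pow hlim)
  have herror := tendstoUniformlyOn_zero_of_norm_le (K := K)
    (F := fun N η => ∑ n ∈ range N, ((f n : ℂ) / (N : ℂ) ^ (d + 1)) * (1 + η / N) ^ ((n : ℂ) + α) -
      riemannSum (fun t => (t : ℂ) ^ d * exp (η * t)) N)
    (((hsum.const_mul (3 * Real.exp R)).add
      ((tendsto_const_div_atTop_nhds_zero_nat (R ^ 2 + 2 * |α| * R)).const_mul
        (2 * Real.exp R))).trans_eq (by simp))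
    (by
      filter_upwards [eventually_gt_atTop 0,
        tendsto_natCast_atTop_atTop.eventually_ge_atTop (2 * R),
        tendsto_natCast_atTop_atTop.eventually_ge_atTop (R ^ 2 + 2 * |α| * R)] with N h0 h1 h2
      simpa only [Real.norm_eq_abs] using
        fun η hη => norm_sum_mul_cpow_sub_riemannSum_le d f (hKR η hη) h0 h1 h2)
  convert hriemann.add herror using 1
  · ext N η
    simp only [Pi.add_apply, add_sub_cancel]
  · exact (add_zero _).symm
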